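/- Let A be a pca with K₂(A) compatible with A, and B ⊆ A^A nonempty and closed under the application of K₂(A). If for every a ∈ A there is an element of B extending the partial function x ↦ ax represented by a, then B is downwards closed with respect to ≤_T: whenever γ ∈ B and β ≤_T γ, then β ∈ B. -/

import Mathlib

open Classical

noncomputable section

namespace OostenK2

universe u

/-! ### Finite partial functions -/

/-- Finite partial functions `A ⇀ A`, as finite functional graphs,
ordered by inclusion of graphs. -/
abbrev FPF (A : Type u) : Type u :=
  {p : Set (A × A) // (∀ ⦃a b b'⦄, (a, b) ∈ p → (a, b') ∈ p → b = b') ∧ p.Finite}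

variable {A : Type u}

/-- The domain of a finite partial function. -/
def FPF.dom (p : FPF A) : Set A := Prod.fst '' p.val

/-- The empty finite partial function (the root of sequential trees). -/
def FPF.empty (A : Type u) : FPF A :=
  ⟨∅, fun _ _ _ h => absurd h (Set.notMem_empty _), Set.finite_empty⟩

/-- A total function `α` extends the finite partial function `p`. -/
def agrees (α : A → A) (p : FPF A) : Prop := ∀ ⦃a b⦄, (a, b) ∈ p.val → α a = b

/-- A partial function `β` extends the finite partial function `p`. -/
def agreesP (β : A → Option A) (p : FPF A) : Prop :=
  ∀ ⦃a b⦄, (a, b) ∈ p.val → β a = some b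

/-- Two finite partial functions are compatible if their union is a function. -/
def compatFPF (s t : FPF A) : Prop :=
  ∀ ⦃a b b'⦄, (a, b) ∈ s.val → (a, b') ∈ t.val → b = b'

/-! ### Trees -/

section Trees

variable {X : Type*} [PartialOrder X]

/-- A leaf of `T`: an element of `T` with no strict extension in `T`. -/
def IsLeaf (T : Set X) (p : X) : Prop := p ∈ T ∧ ¬∃ q ∈ T, p < q

/-- `q` is an immediate successor of `p` in `T`. -/
def ImmSucc (T : Set X) (p q : X) : Prop :=
  q ∈ T ∧ p < q ∧ ¬∃ t ∈ T, p < t ∧ t < q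

/-- `T` is a tree with root `root`: the root belongs to `T`, lies below every
element, and the predecessors of any element form a chain. -/
def IsTreeOn (root : X) (T : Set X) : Prop :=
  root ∈ T ∧ (∀ p ∈ T, root ≤ p) ∧ ∀ p ∈ T, IsChain (· ≤ ·) {t | t ∈ T ∧ t ≤ p}

/-- A tree is well-founded iff it has no infinite strictly increasing path. -/
def WellFoundedTree (T : Set X) : Prop :=
  ¬∃ f : ℕ → X, (∀ n, f n ∈ T) ∧ StrictMono f

end Trees

/-- A sequential tree: a tree of finite partial functions, rooted at the empty
function, in which all immediate successors of a non-leaf `p` have domain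
`dom p ∪ {a}` for a single `a ∉ dom p`. -/
def IsSeqTree (T : Set (FPF A)) : Prop :=
  IsTreeOn (FPF.empty A) T ∧
  ∀ p ∈ T, ¬IsLeaf T p →
    ∃ a ∉ FPF.dom p, ∀ q, ImmSucc T p q → FPF.dom q = insert a (FPF.dom p)

/-- A total sequential tree: the immediate successors of a non-leaf `p` are
*all* extensions of `p` with domain `dom p ∪ {a}`. -/
def IsTotalSeqTree (T : Set (FPF A)) : Prop :=
  IsTreeOn (FPF.empty A) T ∧
  ∀ p ∈ T, ¬IsLeaf T p →
    ∃ a ∉ FPF.dom p,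
      ∀ q : FPF A, ImmSucc T p q ↔ p < q ∧ FPF.dom q = insert a (FPF.dom p)

/-- `Φ` (as a relation `(A → A) → A → Prop`) is a partial sequential function:
`Φ α = b` iff the path of `α` through some total sequential tree `T` ends in a
leaf `v` with `F v = b`. -/
def SeqRel (Φ : (A → A) → A → Prop) : Prop :=
  ∃ (T : Set (FPF A)) (F : FPF A → A), IsTotalSeqTree T ∧
    ∀ α b, Φ α b ↔ ∃ v, IsLeaf T v ∧ agrees α v ∧ F v = b

/-- A total bisequential tree: pairs of finite partial functions ordered by
pairwise inclusion; at every non-leaf, either the first or the second component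
is interrogated at a single new argument, with all possible answers present. -/
def IsTotalBiTree (T : Set (FPF A × FPF A)) : Prop :=
  IsTreeOn (FPF.empty A, FPF.empty A) T ∧
  ∀ p ∈ T, ¬IsLeaf T p →
    (∃ a ∉ FPF.dom p.1, ∀ q : FPF A × FPF A,
        ImmSucc T p q ↔ q.2 = p.2 ∧ p.1 ≤ q.1 ∧ FPF.dom q.1 = insert a (FPF.dom p.1)) ∨
    (∃ b ∉ FPF.dom p.2, ∀ q : FPF A × FPF A,
        ImmSucc T p q ↔ q.1 = p.1 ∧ p.2 ≤ q.2 ∧ FPF.dom q.2 = insert b (FPF.dom p.2))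

/-- `G` is a total bisequential function. -/
def BiSeqTotal (G : (A → A) → (A → A) → A) : Prop :=
  ∃ (T : Set (FPF A × FPF A)) (F : FPF A × FPF A → A), IsTotalBiTree T ∧
    ∀ α β, ∃ v, IsLeaf T v ∧ agrees α v.1 ∧ agrees β v.2 ∧ G α β = F v

/-! ### Interrogations (total functions)

Throughout, `mk : List A → A` is an injective coding of finite sequences,
`qp b` is the code `⟨q,b⟩` of a query and `rp c` the code `⟨r,c⟩` of a result. -/

/-- `L` is an interrogation of `β` by `α`. -/
def Interrog (mk : List A → A) (qp : A → A) (α β : A → A) (L : List A) : Prop :=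
  ∀ j (hj : j < L.length), ∃ b, α (mk (L.take j)) = qp b ∧ β b = L[j]'hj

/-- `φ_α(β) = c` via interrogations. -/
def phiRel (mk : List A → A) (qp rp : A → A) (α β : A → A) (c : A) : Prop :=
  ∃ L, Interrog mk qp α β L ∧ α (mk L) = rp c

/-- `L` is an `a`-interrogation of `β` by `α`. -/
def AInterrog (mk : List A → A) (qp : A → A) (a : A) (α β : A → A) (L : List A) : Prop :=
  ∀ j (hj : j < L.length), ∃ b, α (mk (a :: L.take j)) = qp b ∧ β b = L[j]'hj

/-- `φ^a(α,β) = c` via `a`-interrogations. -/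
def phiA (mk : List A → A) (qp rp : A → A) (a : A) (α β : A → A) (c : A) : Prop :=
  ∃ L, AInterrog mk qp a α β L ∧ α (mk (a :: L)) = rp c

/-- The application of `K₂(A)`: `αβ` is defined with value `γ` iff
`φ^a(α,β) = γ a` for every `a`. -/
def AppRel (mk : List A → A) (qp rp : A → A) (α β γ : A → A) : Prop :=
  ∀ a, phiA mk qp rp a α β (γ a)

/-! ### Partial combinatory algebras (abstractly) -/

/-- A set with a partial binary application. -/
structure PCAStruct (X : Type*) where
  app : X → X → Part X

/-- Extension of the application to `Part`; `Part`-equality is Kleene equality. -/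
def pap {X : Type*} (S : PCAStruct X) (u v : Part X) : Part X :=
  u.bind fun a => v.bind fun b => S.app a b

/-- `S` is a partial combinatory algebra: there are `k`, `s` with
`kxy = x` (everywhere defined), `sxy` defined, and `sxyz ≃ (xz)(yz)`. -/
def IsPCA {X : Type*} (S : PCAStruct X) : Prop :=
  ∃ k s : X,
    (∀ x y : X, pap S (S.app k x) (Part.some y) = Part.some x) ∧
    (∀ x y : X, (pap S (S.app s x) (Part.some y)).Dom) ∧
    (∀ x y z : X,
      pap S (pap S (S.app s x) (Part.some y)) (Part.some z)
        = pap S (S.app x z) (S.app y z))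

/-- `t`, `f` are Booleans of `S`: distinct, with a definition-by-cases combinator. -/
def IsBooleans {X : Type*} (S : PCAStruct X) (t f : X) : Prop :=
  t ≠ f ∧ ∃ C : X, ∀ a b : X,
    pap S (pap S (S.app C t) (Part.some a)) (Part.some b) = Part.some a ∧
    pap S (pap S (S.app C f) (Part.some a)) (Part.some b) = Part.some b

/-- Applicative morphism `γ : S → T`: a total relation such that some realizer
`r` tracks application. -/
def IsAppMor {X Y : Type*} (S : PCAStruct X) (T : PCAStruct Y) (γ : X → Set Y) : Prop :=
  (∀ x, (γ x).Nonempty) ∧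
  ∃ r : Y, ∀ x x' z : X, z ∈ S.app x x' → ∀ b ∈ γ x, ∀ b' ∈ γ x',
    ∃ w, w ∈ pap T (T.app r b) (Part.some b') ∧ w ∈ γ z

/-- The preorder on applicative morphisms. -/
def morLE {X Y : Type*} (T : PCAStruct Y) (γ γ' : X → Set Y) : Prop :=
  ∃ s : Y, ∀ x : X, ∀ b ∈ γ x, ∃ c, c ∈ T.app s b ∧ c ∈ γ' x

def morEquiv {X Y : Type*} (T : PCAStruct Y) (γ γ' : X → Set Y) : Prop :=
  morLE T γ γ' ∧ morLE T γ' γ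

/-- Composition of applicative morphisms (as total relations). -/
def morComp {X Y Z : Type*} (γ : X → Set Y) (ε : Y → Set Z) : X → Set Z :=
  fun x => ⋃ y ∈ γ x, ε y

/-- Decidability of a morphism w.r.t. chosen Booleans. -/
def IsDecidableMor {X Y : Type*} (T : PCAStruct Y) (γ : X → Set Y)
    (tX fX : X) (tY fY : Y) : Prop :=
  ∃ d : Y, (∀ b ∈ γ tX, T.app d b = Part.some tY) ∧
    (∀ b ∈ γ fX, T.app d b = Part.some fY)

/-- `rf` represents the partial function `f : X ⇀ X` w.r.t. `γ`. -/
def RepresentsPFun {X Y : Type*} (T : PCAStruct Y) (γ : X → Set Y)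
    (f : X → Option X) (rf : Y) : Prop :=
  ∀ a x, f a = some x → ∀ b ∈ γ a, ∃ c, c ∈ T.app rf b ∧ c ∈ γ x

/-- The pca `K₂(A)` on `A^A` (application via `a`-interrogations). -/
def K2 (mk : List A → A) (qp rp : A → A) : PCAStruct (A → A) where
  app α β := ⟨∀ a, ∃ c, phiA mk qp rp a α β c, fun h a => (h a).choose⟩

/-! ### Interrogations for partial functions -/

/-- Interrogation of a partial `β` by a partial `α`. -/
def PInterrog (mk : List A → A) (qp : A → A) (α β : A → Option A) (L : List A) : Prop :=
  ∀ j (hj : j < L.length), ∃ b, α (mk (L.take j)) = some (qp b) ∧ β b = some (L[j]'hj)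

/-- `φ_α(β) = c` for partial functions. -/
def phiPRel (mk : List A → A) (qp rp : A → A) (α β : A → Option A) (c : A) : Prop :=
  ∃ L, PInterrog mk qp α β L ∧ α (mk L) = some (rp c)

/-- `a`-interrogation of a partial `β` by a partial `α`. -/
def PAInterrog (mk : List A → A) (qp : A → A) (a : A) (α β : A → Option A)
    (L : List A) : Prop :=
  ∀ j (hj : j < L.length), ∃ b, α (mk (a :: L.take j)) = some (qp b) ∧ β b = some (L[j]'hj)

/-- `φ^a(α,β) = c` for partial functions. -/
def phiPA (mk : List A → A) (qp rp : A → A) (a : A) (α β : A → Option A) (c : A) : Prop :=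
  ∃ L, PAInterrog mk qp a α β L ∧ α (mk (a :: L)) = some (rp c)

/-- The (total!) application of `K₂^p(A)` on partial functions. -/
def K2pApp (mk : List A → A) (qp rp : A → A) (α β : A → Option A) : A → Option A :=
  fun a => if h : ∃ c, phiPA mk qp rp a α β c then some h.choose else none

/-- `K₂^p(A)` as a `PCAStruct` (with everywhere-defined application). -/
def K2p (mk : List A → A) (qp rp : A → A) : PCAStruct (A → Option A) :=
  ⟨fun α β => Part.some (K2pApp mk qp rp α β)⟩

/-! ### A pca with standard structure (Booleans, pairing, tuple coding, recursion) -/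

/-- A pca together with the standard derived structure: Booleans with a case
combinator, pairing, an injective standard tuple coding with combinators
manipulating it, and a fixed-point combinator. All of these exist in any
(nontrivial) pca. -/
structure StdPCA (A : Type u) where
  S : PCAStruct A
  isPCA : IsPCA S
  t : A
  f : A
  t_ne_f : t ≠ f
  Cc : A
  C_t : ∀ a b : A, pap S (pap S (S.app Cc t) (Part.some a)) (Part.some b) = Part.some a
  C_f : ∀ a b : A, pap S (pap S (S.app Cc f) (Part.some a)) (Part.some b) = Part.some b
  pairF : A → A → A
  Pc : A
  P0 : A
  P1 : A
  P_spec : ∀ x y : A, pap S (S.app Pc x) (Part.some y) = Part.some (pairF x y)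
  P0_spec : ∀ x y : A, S.app P0 (pairF x y) = Part.some x
  P1_spec : ∀ x y : A, S.app P1 (pairF x y) = Part.some y
  tup : List A → A
  tup_inj : Function.Injective tup
  CONS : A
  CONS_spec : ∀ (x : A) (L : List A),
    pap S (S.app CONS x) (Part.some (tup L)) = Part.some (tup (x :: L))
  SNOC : A
  SNOC_spec : ∀ (L : List A) (y : A),
    pap S (S.app SNOC (tup L)) (Part.some y) = Part.some (tup (L ++ [y]))
  Zc : A
  Z_spec : ∀ g : A, (S.app Zc g).Dom ∧ ∀ zg ∈ S.app Zc g, ∀ x : A,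
    S.app zg x = pap S (S.app g zg) (Part.some x)

/-- The partial function `x ↦ a·x` represented by `a ∈ A`. -/
def abar (P : StdPCA A) (a : A) : A → Option A :=
  fun x => if h : (P.S.app a x).Dom then some ((P.S.app a x).get h) else none

/-- An `x`-interrogation of the oracle `g : A ⇀ A` by `a ∈ A`, inside the pca. -/
def OInterrog (P : StdPCA A) (g : A → Option A) (a x : A) (L : List A) : Prop :=
  ∀ j (hj : j < L.length), ∃ v,
    P.S.app a (P.tup (x :: L.take j)) = Part.some (P.pairF P.f v) ∧ g v = some (L[j]'hj)

/-- The oracle application of `A[g]` : `a ·^g x = c`. -/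
def oapp (P : StdPCA A) (g : A → Option A) (a x c : A) : Prop :=
  ∃ L, OInterrog P g a x L ∧ P.S.app a (P.tup (x :: L)) = Part.some (P.pairF P.t c)

/-- `fn ≤_T g` : `fn` is representable in `A[g]`. -/
def leT (P : StdPCA A) (fn g : A → Option A) : Prop :=
  ∃ a : A, ∀ x y, fn x = some y → oapp P g a x y

/-- `j` is the join `f ⊔ g`. -/
def JoinSpec (P : StdPCA A) (f g j : A → Option A) : Prop :=
  (∀ x, j (P.pairF P.t x) = f x) ∧ (∀ x, j (P.pairF P.f x) = g x) ∧
  (∀ y, (∀ x, y ≠ P.pairF P.t x ∧ y ≠ P.pairF P.f x) → j y = none)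

/-- `K₂(A)` (built from the coding `mk`, `q`, `r`) is compatible with the pca
structure on `A`: elements of `A` translate between the codings and between
`q, r` and `⊥, ⊤`. -/
def CompatCoding (P : StdPCA A) (mk : List A → A) (q r : A) : Prop :=
  (∃ a : A, ∀ L, P.S.app a (mk L) = Part.some (P.tup L)) ∧
  (∃ b : A, ∀ L, P.S.app b (P.tup L) = Part.some (mk L)) ∧
  (∃ c : A, P.S.app c q = Part.some P.f ∧ P.S.app c r = Part.some P.t)


/-!
An oracle computation `a ·^γ x` runs `a` on the history `⟨x, v₀, …, vₖ₋₁⟩` of oracle answers; at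
each step `a` either asks `γ` at `v` (value `⟨⊥, v⟩`) or halts with `c` (value `⟨⊤, c⟩`).
Compatibility and combinatory completeness give `a' ∈ A` rewriting each such step into the `K₂`
coding `⟨q, v⟩` resp. `⟨r, c⟩`. An `α ∈ B` extending `x ↦ a'x` then carries out the oracle
computation of `a` as `x`-interrogations of `γ`, so `αγ = β` in `K₂(A)` and `β ∈ B` by closure.
-/

section Interrogation

variable {mk : List A → A} {qp rp : A → A} {a : A} {α β : A → A}

theorem AInterrog.take_eq_take (hqp : Function.Injective qp) {L₁ L₂ : List A}
    (h₁ : AInterrog mk qp a α β L₁) (h₂ : AInterrog mk qp a α β L₂) :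
    ∀ j ≤ L₁.length, j ≤ L₂.length → L₁.take j = L₂.take j := by
  intro j
  induction j with
  | zero => simp
  | succ j ih =>
    intro hj₁ hj₂
    have hprefix := ih (by omega) (by omega)
    obtain ⟨b₁, hq₁, hv₁⟩ := h₁ j (by omega)
    obtain ⟨b₂, hq₂, hv₂⟩ := h₂ j (by omega)
    rw [hprefix] at hq₁
    have hanswer : L₁[j] = L₂[j] := by rw [← hv₁, ← hv₂, hqp (hq₁.symm.trans hq₂)]
    rw [List.take_add_one, List.take_add_one, hprefix, List.getElem?_eq_getElem (by omega),
      List.getElem?_eq_getElem (by omega), hanswer]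

theorem AInterrog.eq_of_result (hqp : Function.Injective qp) (hqr : ∀ b c, qp b ≠ rp c)
    {L₁ L₂ : List A} {c₁ c₂ : A}
    (h₁ : AInterrog mk qp a α β L₁) (h₂ : AInterrog mk qp a α β L₂)
    (hr₁ : α (mk (a :: L₁)) = rp c₁) (hr₂ : α (mk (a :: L₂)) = rp c₂) : L₁ = L₂ := by
  wlog hle : L₁.length ≤ L₂.length generalizing L₁ L₂ c₁ c₂
  · exact (this h₂ h₁ hr₂ hr₁ (by omega)).symm
  have hprefix : L₁ = L₂.take L₁.length := by
    simpa using h₁.take_eq_take hqp h₂ L₁.length le_rfl hle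
  rcases hle.lt_or_eq with hlt | hlen
  · -- after the common prefix `L₁`, the second run asks a query where the first one halted
    obtain ⟨b, hb, -⟩ := h₂ L₁.length hlt
    rw [← hprefix] at hb
    exact absurd (hb.symm.trans hr₁) (hqr b c₁)
  · rwa [hlen, List.take_length] at hprefix

theorem phiA_unique (hqp : Function.Injective qp) (hrp : Function.Injective rp)
    (hqr : ∀ b c, qp b ≠ rp c) {c₁ c₂ : A}
    (h₁ : phiA mk qp rp a α β c₁) (h₂ : phiA mk qp rp a α β c₂) : c₁ = c₂ := by
  obtain ⟨L₁, hL₁, hr₁⟩ := h₁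
  obtain ⟨L₂, hL₂, hr₂⟩ := h₂
  obtain rfl := hL₁.eq_of_result hqp hqr hL₂ hr₁ hr₂
  exact hrp (hr₁.symm.trans hr₂)

theorem mem_K2_app (hqp : Function.Injective qp) (hrp : Function.Injective rp)
    (hqr : ∀ b c, qp b ≠ rp c) {γ : A → A} (h : ∀ x, phiA mk qp rp x α β (γ x)) :
    γ ∈ (K2 mk qp rp).app α β :=
  ⟨fun x => ⟨γ x, h x⟩, funext fun x => phiA_unique hqp hrp hqr (Exists.choose_spec _) (h x)⟩

theorem phiA_of_oapp (P : StdPCA A) {x c : A}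
    (hquery : ∀ M v, P.S.app a (P.tup (x :: M)) = Part.some (P.pairF P.f v) →
      α (mk (x :: M)) = qp v)
    (hresult : ∀ M c, P.S.app a (P.tup (x :: M)) = Part.some (P.pairF P.t c) →
      α (mk (x :: M)) = rp c)
    (h : oapp P (fun y => some (β y)) a x c) : phiA mk qp rp x α β c := by
  obtain ⟨L, hL, hc⟩ := h
  refine ⟨L, fun j hj => ?_, hresult L c hc⟩
  obtain ⟨v, hv, hβv⟩ := hL j hj
  exact ⟨v, hquery _ v hv, Option.some.inj hβv⟩

end Interrogation

section CombinatoryCompleteness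

inductive Expr (A : Type u) : Type u
  | const : A → Expr A
  | var : Expr A
  | app : Expr A → Expr A → Expr A

infixl:100 " ⬝ " => Expr.app

def Expr.eval (S : PCAStruct A) : Expr A → A → Part A
  | .const c, _ => Part.some c
  | .var, x => Part.some x
  | .app e₁ e₂, x => pap S (e₁.eval S x) (e₂.eval S x)

@[simp]
theorem pap_some_some (S : PCAStruct A) (a b : A) :
    pap S (Part.some a) (Part.some b) = S.app a b := by
  simp [pap]

theorem IsPCA.exists_app_eq_eval {S : PCAStruct A} (h : IsPCA S) (e : Expr A) :
    ∃ u : A, ∀ x : A, S.app u x = e.eval S x := by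
  obtain ⟨k, s, hk, hs, hsp⟩ := h
  have hkc : ∀ c, ∃ u, S.app k c = Part.some u ∧ ∀ x, S.app u x = Part.some c := by
    intro c
    have hmem : c ∈ pap S (S.app k c) (Part.some c) := by rw [hk]; exact Part.mem_some c
    obtain ⟨u, hu, -⟩ := Part.mem_bind_iff.mp hmem
    have hu := Part.eq_some_iff.mpr hu
    exact ⟨u, hu, fun x => by rw [← hk c x, hu, pap_some_some]⟩
  have hsuv : ∀ u v, ∃ w, ∀ x, S.app w x = pap S (S.app u x) (S.app v x) := by
    intro u v
    obtain ⟨w, hw⟩ := Part.dom_iff_mem.mp (hs u v)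
    exact ⟨w, fun x => by rw [← pap_some_some, ← Part.eq_some_iff.mpr hw, hsp]⟩
  induction e with
  | const c =>
    obtain ⟨u, -, hu⟩ := hkc c
    exact ⟨u, hu⟩
  | var =>
    -- the identity is `s k k`
    obtain ⟨i, hi⟩ := hsuv k k
    refine ⟨i, fun x => ?_⟩
    obtain ⟨kx, hkx, hkxy⟩ := hkc x
    rw [hi, hkx, pap_some_some, hkxy]
    rfl
  | app e₁ e₂ ih₁ ih₂ =>
    obtain ⟨u₁, h₁⟩ := ih₁
    obtain ⟨u₂, h₂⟩ := ih₂
    obtain ⟨w, hw⟩ := hsuv u₁ u₂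
    exact ⟨w, fun x => by rw [hw, h₁, h₂]; rfl⟩

end CombinatoryCompleteness

/-- On input `mk L`, this computes `C (p₀ y) ⟨r, p₁ y⟩ ⟨q, p₁ y⟩` for `y = a·[L]`, with the
tuples `⟨s, p₁ y⟩` formed in the standard coding and translated to `mk` by `b₂`. -/
def translatorExpr (P : StdPCA A) (a a₁ b₂ q r : A) : Expr A :=
  let step : Expr A := .const a ⬝ (.const a₁ ⬝ .var)
  let answer (s : A) : Expr A :=
    .const b₂ ⬝ (.const P.CONS ⬝ .const s ⬝ (.const P.CONS ⬝ (.const P.P1 ⬝ step) ⬝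
      .const (P.tup [])))
  .const P.Cc ⬝ (.const P.P0 ⬝ step) ⬝ answer r ⬝ answer q

theorem exists_translator (P : StdPCA A) {mk : List A → A} {a₁ b₂ : A}
    (ha₁ : ∀ L, P.S.app a₁ (mk L) = Part.some (P.tup L))
    (hb₂ : ∀ L, P.S.app b₂ (P.tup L) = Part.some (mk L)) (a q r : A) :
    ∃ a' : A, ∀ L v,
      (P.S.app a (P.tup L) = Part.some (P.pairF P.f v) →
        P.S.app a' (mk L) = Part.some (mk [q, v])) ∧
      (P.S.app a (P.tup L) = Part.some (P.pairF P.t v) →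
        P.S.app a' (mk L) = Part.some (mk [r, v])) := by
  obtain ⟨a', ha'⟩ := P.isPCA.exists_app_eq_eval (translatorExpr P a a₁ b₂ q r)
  refine ⟨a', fun L v => ⟨fun h => ?_, fun h => ?_⟩⟩ <;>
    simp only [ha', translatorExpr, Expr.eval, pap_some_some, ha₁, h, P.P0_spec, P.P1_spec,
      P.CONS_spec, hb₂, P.C_f, P.C_t]

theorem statement12_general {A : Type u} (P : StdPCA A) (code : List A → A)
    (hcode : Function.Injective code) (q r : A) (hqr : q ≠ r)
    (hcompat : CompatCoding P code q r)
    (B : Set (A → A))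
    (hclosed : ∀ α ∈ B, ∀ β ∈ B, ∀ γ : A → A,
      γ ∈ (K2 code (fun x => code [q, x]) (fun x => code [r, x])).app α β → γ ∈ B)
    (hext : ∀ a : A, ∃ α ∈ B, ∀ x y : A, P.S.app a x = Part.some y → α x = y) :
    ∀ γ ∈ B, ∀ β : A → A,
      leT P (fun x => some (β x)) (fun x => some (γ x)) → β ∈ B := by
  intro γ hγ β ⟨a, ha⟩
  obtain ⟨⟨a₁, ha₁⟩, ⟨b₂, hb₂⟩, -⟩ := hcompat
  obtain ⟨a', ha'⟩ := exists_translator P ha₁ hb₂ a q r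
  obtain ⟨α, hαB, hα⟩ := hext a'
  have hβ : ∀ x, phiA code (fun v => code [q, v]) (fun c => code [r, c]) x α γ (β x) :=
    fun x => phiA_of_oapp P (fun _ v h => hα _ _ ((ha' _ v).1 h))
      (fun _ c h => hα _ _ ((ha' _ c).2 h)) (ha x (β x) rfl)
  refine hclosed α hαB γ hγ β (mem_K2_app ?_ ?_ ?_ hβ)
  · exact fun v w h => by simpa using hcode h
  · exact fun v w h => by simpa using hcode h
  · exact fun v c h => hqr (List.cons.inj (hcode h)).1

/-- Let `K₂(A)` be compatible with the pca `A`, and let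
`B ⊆ A^A` be nonempty and closed under application. If every partial function
`x ↦ ax` (`a ∈ A`) extends to an element of `B`, then `B` is downwards closed
w.r.t. `≤_T`. -/
theorem statement12 {A : Type u} (P : StdPCA A) (code : List A → A)
    (hcode : Function.Injective code) (q r : A) (hqr : q ≠ r)
    (hcompat : CompatCoding P code q r)
    (B : Set (A → A)) (hne : B.Nonempty)
    (hclosed : ∀ α ∈ B, ∀ β ∈ B, ∀ γ : A → A,
      γ ∈ (K2 code (fun x => code [q, x]) (fun x => code [r, x])).app α β → γ ∈ B)
    (hext : ∀ a : A, ∃ α ∈ B, ∀ x y : A, P.S.app a x = Part.some y → α x = y) :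
    ∀ γ ∈ B, ∀ β : A → A,
      leT P (fun x => some (β x)) (fun x => some (γ x)) → β ∈ B :=
  statement12_general P code hcode q r hqr hcompat B hclosed hext

end OostenK2
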